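/- arXiv:2011.08565 — 2 statements merged into one kernel-verified Lean document; each statement's English description precedes it below -/
import Mathlib

section
/- Suppose f_t' > 0 at the equilibrium incoming investments for all t, and each individual is strictly more related to herself than to any other (r_{i,i} > r_{i,t} for all t ≠ i). Then at any Nash equilibrium x*, every individual i attaining the highest marginal gain in personal fitness, i.e. i ∈ argmax_{u∈I} f_u'(y*_u), is selfish: x*_{i,t} = 0 for all t ≠ i. -/
/-!
If `i` has the largest marginal fitness, then for `t ≠ i` the relatedness-weighted return
`r i t * f_t'(y_t)` is strictly below `r i i * f_i'(y_i) = f_i'(y_i)`, since `r i t < 1` and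
`f_t'(y_t)` is positive and at most `f_i'(y_i)`. So investing in `t` falls strictly short of `i`'s
best return, and complementary slackness forces `x*_{i,t} = 0`.
-/

theorem Finset.eq_zero_of_sup'_sub_mul_eq_zero {ι R : Type*} [Ring R] [LinearOrder R]
    [IsStrictOrderedRing R] {s : Finset ι} (hs : s.Nonempty) {g : ι → R} {i t : ι}
    (hi : i ∈ s) (hlt : g t < g i) {x : R} (h : (s.sup' hs g - g t) * x = 0) : x = 0 :=
  (mul_eq_zero.mp h).resolve_left (sub_pos.mpr (hlt.trans_le (s.le_sup' g hi))).ne'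

theorem argmax_marginal_fitness_is_selfish_general
    {I : Type*} [Fintype I] [Nonempty I]
    (f : I → ℝ → ℝ) (r : I → I → ℝ)
    (hrss : ∀ s, r s s = 1)
    (xstar : I → I → ℝ)
    (hcomp : ∀ s t,
      (Finset.univ.sup' Finset.univ_nonempty
          (fun u => r s u * deriv (f u) (∑ v, xstar v u))
        - r s t * deriv (f t) (∑ v, xstar v t)) * xstar s t = 0)
    (hf'pos : ∀ t, 0 < deriv (f t) (∑ v, xstar v t))
    (hself : ∀ i t, t ≠ i → r i t < r i i) :
    ∀ i, (∀ u, deriv (f u) (∑ v, xstar v u) ≤ deriv (f i) (∑ v, xstar v i)) →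
      ∀ t, t ≠ i → xstar i t = 0 := by
  intro i hi t ht
  refine Finset.eq_zero_of_sup'_sub_mul_eq_zero _ (Finset.mem_univ i) ?_ (hcomp i t)
  have hrit : r i t < 1 := hrss i ▸ hself i t ht
  simp only [hrss i, one_mul]
  exact (mul_lt_of_lt_one_left (hf'pos t) hrit).trans_le (hi t)

/-- If marginal fitnesses are positive at equilibrium and each individual is
strictly more related to herself than to anyone else, then any individual with
the highest marginal gain in personal fitness is selfish at equilibrium. -/
theorem argmax_marginal_fitness_is_selfish
    {I : Type*} [Fintype I] [Nonempty I]
    (f : I → ℝ → ℝ) (r : I → I → ℝ) (b : I → ℝ)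
    (hb : ∀ s, 0 < b s)
    (hr : ∀ s t, 0 ≤ r s t ∧ r s t ≤ 1) (hrss : ∀ s, r s s = 1)
    (hdiff : ∀ t, Differentiable ℝ (f t))
    (hdiff2 : ∀ t, Differentiable ℝ (deriv (f t)))
    (hf'' : ∀ t y, deriv (deriv (f t)) y ≤ 0)
    (xstar : I → I → ℝ)
    (hpos : ∀ s t, 0 ≤ xstar s t)
    (hcomp : ∀ s t,
      (Finset.univ.sup' Finset.univ_nonempty
          (fun u => r s u * deriv (f u) (∑ v, xstar v u))
        - r s t * deriv (f t) (∑ v, xstar v t)) * xstar s t = 0)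
    (hbud : ∀ s, ∑ t, xstar s t = b s)
    (hf'pos : ∀ t, 0 < deriv (f t) (∑ v, xstar v t))
    (hself : ∀ i t, t ≠ i → r i t < r i i) :
    ∀ i, (∀ u, deriv (f u) (∑ v, xstar v u) ≤ deriv (f i) (∑ v, xstar v i)) →
      ∀ t, t ≠ i → xstar i t = 0 :=
  argmax_marginal_fitness_is_selfish_general f r hrss xstar hcomp hf'pos hself
end

section
/- In a two-individual family I = {p, c} (parent and child) with symmetric relatedness r_{p,c} = r_{c,p} = r ∈ (0,1), and identical differentiable, strictly concave, strictly increasing fitness functions f_p = f_c = f, if at a Nash equilibrium the parent invests positively in the child (x*_{p,c} > 0) then f'(y*_c) ≥ f'(y*_p), i.e. y*_c ≤ y*_p; consequently the child, having f'(y*_c) ≥ f'(y*_p) and r_{c,c} = 1 > r, is selfish: x*_{c,p} = 0. -/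
/-!
Complementary slackness says that an individual investing a positive amount in `t` finds `t`
among its best targets. The parent invests in the child, so `f'(y_p) ≤ r f'(y_c) < f'(y_c)`.
The child then values itself at `f'(y_c) > r f'(y_p)`, strictly more than the parent, so by
complementary slackness it invests nothing in the parent.
-/

section Slackness

variable {ι α : Type*} [Ring α] [LinearOrder α] [NoZeroDivisors α]
  {s : Finset ι} (hs : s.Nonempty) {g : ι → α} {t u : ι} {x : α}

include hs in
theorem le_of_sup'_sub_mul_eq_zero (h : (s.sup' hs g - g t) * x = 0) (hx : x ≠ 0)
    (hu : u ∈ s) : g u ≤ g t := by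
  have hsup : s.sup' hs g = g t := sub_eq_zero.mp ((mul_eq_zero.mp h).resolve_right hx)
  exact hsup ▸ s.le_sup' g hu

include hs in
theorem eq_zero_of_sup'_sub_mul_eq_zero (h : (s.sup' hs g - g t) * x = 0) (hu : u ∈ s)
    (hlt : g t < g u) : x = 0 :=
  by_contra fun hx => (le_of_sup'_sub_mul_eq_zero hs h hx hu).not_gt hlt

end Slackness

theorem parent_child_selfish_child_general
    {I : Type*} [Fintype I] [Nonempty I]
    (p c : I)
    (f : ℝ → ℝ) (r : I → I → ℝ)
    (r0 : ℝ) (hr1 : r0 < 1)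
    (hrpc : r p c = r0) (hrcp : r c p = r0) (hrself : ∀ i, r i i = 1)
    (hf'pos : ∀ y, 0 < deriv f y)
    (hf'anti : StrictAnti (deriv f))
    (xstar : I → I → ℝ)
    (hcomp : ∀ s t,
      (Finset.univ.sup' Finset.univ_nonempty
          (fun u => r s u * deriv f (∑ v, xstar v u))
        - r s t * deriv f (∑ v, xstar v t)) * xstar s t = 0)
    (hinvest : 0 < xstar p c) :
    deriv f (∑ v, xstar v p) ≤ deriv f (∑ v, xstar v c) ∧
    ∑ v, xstar v c ≤ ∑ v, xstar v p ∧
    xstar c p = 0 := by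
  set yp := ∑ v, xstar v p
  set yc := ∑ v, xstar v c
  have parent_best : deriv f yp ≤ r0 * deriv f yc := by
    simpa only [hrself, hrpc, one_mul] using
      le_of_sup'_sub_mul_eq_zero _ (hcomp p c) hinvest.ne' (Finset.mem_univ p)
  have marginal_le : deriv f yp ≤ deriv f yc :=
    parent_best.trans (mul_le_of_le_one_left (hf'pos yc).le hr1.le)
  refine ⟨marginal_le, hf'anti.le_iff_ge.mp marginal_le, ?_⟩
  have child_prefers_self : r c p * deriv f yp < r c c * deriv f yc := by
    rw [hrcp, hrself, one_mul]
    exact (mul_lt_of_lt_one_left (hf'pos yp) hr1).trans_le marginal_le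
  exact eq_zero_of_sup'_sub_mul_eq_zero _ (hcomp c p) (Finset.mem_univ c) child_prefers_self

/-- Parent-child family: if at equilibrium the parent invests positively in the
child, then the child's marginal fitness weakly exceeds the parent's, hence the
child's incoming investment is at most the parent's, and the child is selfish. -/
theorem parent_child_selfish_child
    {I : Type*} [Fintype I] [Nonempty I]
    (p c : I) (hpc : p ≠ c) (hall : ∀ i, i = p ∨ i = c)
    (f : ℝ → ℝ) (r : I → I → ℝ) (b : I → ℝ)
    (hb : ∀ s, 0 < b s)
    (r0 : ℝ) (hr0 : 0 < r0) (hr1 : r0 < 1)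
    (hrpc : r p c = r0) (hrcp : r c p = r0) (hrself : ∀ i, r i i = 1)
    (hdiff : Differentiable ℝ f)
    (hf'pos : ∀ y, 0 < deriv f y)
    (hf'anti : StrictAnti (deriv f))
    (xstar : I → I → ℝ)
    (hpos : ∀ s t, 0 ≤ xstar s t)
    (hcomp : ∀ s t,
      (Finset.univ.sup' Finset.univ_nonempty
          (fun u => r s u * deriv f (∑ v, xstar v u))
        - r s t * deriv f (∑ v, xstar v t)) * xstar s t = 0)
    (hbud : ∀ s, ∑ t, xstar s t = b s)
    (hinvest : 0 < xstar p c) :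
    deriv f (∑ v, xstar v p) ≤ deriv f (∑ v, xstar v c) ∧
    ∑ v, xstar v c ≤ ∑ v, xstar v p ∧
    xstar c p = 0 :=
  parent_child_selfish_child_general p c f r r0 hr1 hrpc hrcp hrself hf'pos hf'anti xstar hcomp
    hinvest
end
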